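/- Let (E_i), (F_i), (G_i) be inverse systems of abelian groups indexed by the natural numbers, with a short exact sequence of inverse systems 0 → E_i → F_i → G_i → 0. If all the transition maps E_i → E_j (for i ≥ j) are surjective, then the induced sequence of inverse limits 0 → lim E_i → lim F_i → lim G_i → 0 is exact. -/

import Mathlib

/-! Injectivity and exactness in the middle hold levelwise and pass to compatible families,
since `α` is injective. For surjectivity, lift a compatible family `z` one level at a time: if
`y ∈ F n` lifts `z n` and `w₀ ∈ F (n+1)` is any lift of `z (n+1)`, then `fT w₀ - y` lies in the
kernel of `β n`, hence equals `α n e`; lifting `e` along the surjection `E (n+1) → E n` and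
subtracting its image from `w₀` gives a lift of `z (n+1)` that restricts to `y`. -/

open Function

theorem exists_seq_of_forall_exists_succ {F : ℕ → Type*} (P : ∀ n, F n → Prop)
    (R : ∀ n, F (n + 1) → F n → Prop) (h0 : ∃ y, P 0 y)
    (hstep : ∀ n y, P n y → ∃ w, P (n + 1) w ∧ R n w y) :
    ∃ y : ∀ n, F n, ∀ n, P n (y n) ∧ R n (y (n + 1)) (y n) := by
  choose w hwP hwR using hstep
  obtain ⟨y₀, hy₀⟩ := h0
  let c : ∀ n, {y : F n // P n y} := fun n =>
    Nat.rec ⟨y₀, hy₀⟩ (fun n p => ⟨w n p.1 p.2, hwP n p.1 p.2⟩) n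
  exact ⟨fun n => (c n).1, fun n => ⟨(c n).2, hwR n (c n).1 (c n).2⟩⟩

theorem transition_eq_of_forall_succ {F : ℕ → Type*} (fT : ∀ {i j : ℕ}, j ≤ i → F i → F j)
    (hid : ∀ (i : ℕ) (h : i ≤ i) (x : F i), fT h x = x)
    (hcomp : ∀ {i j k : ℕ} (h1 : k ≤ j) (h2 : j ≤ i) (x : F i),
      fT h1 (fT h2 x) = fT (h1.trans h2) x)
    {y : ∀ n, F n} (hy : ∀ n, fT (Nat.le_succ n) (y (n + 1)) = y n)
    {i j : ℕ} (h : j ≤ i) : fT h (y i) = y j := by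
  induction i, h using Nat.le_induction with
  | base => exact hid j _ _
  | succ i hji ih => rw [← ih, ← hy i, hcomp]

theorem Function.Exact.exists_lift_of_surjective {E F G E' F' G' : Type*} [AddCommGroup E]
    [AddCommGroup F] [AddCommGroup G] [AddCommGroup E'] [AddCommGroup F'] [AddCommGroup G']
    {α : E →+ F} {β : F →+ G} {α' : E' →+ F'} {β' : F' →+ G'}
    {e : E' →+ E} {f : F' →+ F} {g : G' →+ G}
    (hα : ∀ x, f (α' x) = α (e x)) (hβ : ∀ x, g (β' x) = β (f x))
    (hexact : Exact α β) (hexact' : Exact α' β') (hβ' : Surjective β') (he : Surjective e)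
    {y : F} {z : G'} (hy : β y = g z) : ∃ w, β' w = z ∧ f w = y := by
  obtain ⟨w₀, hw₀⟩ := hβ' z
  have hker : β (f w₀ - y) = 0 := by rw [map_sub, ← hβ, hw₀, hy, sub_self]
  obtain ⟨x, hx⟩ := (hexact _).mp hker
  obtain ⟨x', rfl⟩ := he x
  refine ⟨w₀ - α' x', ?_, ?_⟩
  · rw [map_sub, hw₀, hexact'.apply_apply_eq_zero, sub_zero]
  · rw [map_sub, hα, hx, sub_sub_cancel]

theorem limit_short_exact_of_surjective_transitions_general
    (E F G : ℕ → Type*)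
    [∀ i, AddCommGroup (E i)] [∀ i, AddCommGroup (F i)] [∀ i, AddCommGroup (G i)]
    (eT : ∀ {i j : ℕ}, j ≤ i → (E i →+ E j))
    (fT : ∀ {i j : ℕ}, j ≤ i → (F i →+ F j))
    (gT : ∀ {i j : ℕ}, j ≤ i → (G i →+ G j))
    (hfT_id : ∀ (i : ℕ) (h : i ≤ i) (x : F i), fT h x = x)
    (hfT_comp : ∀ {i j k : ℕ} (h1 : k ≤ j) (h2 : j ≤ i) (x : F i),
      fT h1 (fT h2 x) = fT (h1.trans h2) x)
    (α : ∀ i, E i →+ F i) (β : ∀ i, F i →+ G i)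
    (hα_comm : ∀ {i j : ℕ} (h : j ≤ i) (x : E i), fT h (α i x) = α j (eT h x))
    (hβ_comm : ∀ {i j : ℕ} (h : j ≤ i) (x : F i), gT h (β i x) = β j (fT h x))
    -- levelwise short exactness
    (hα_inj : ∀ i, Function.Injective (α i))
    (hexact : ∀ (i : ℕ) (y : F i), β i y = 0 ↔ ∃ x : E i, α i x = y)
    (hβ_surj : ∀ i, Function.Surjective (β i))
    -- Mittag-Leffler: surjective transition maps in the first system
    (hML : ∀ {i j : ℕ} (h : j ≤ i), Function.Surjective (eT h)) :
    -- exactness of 0 → lim E → lim F → lim G → 0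
    (∀ x y : {x : ∀ i, E i // ∀ (i j : ℕ) (h : j ≤ i), eT h (x i) = x j},
        (∀ i, α i (x.1 i) = α i (y.1 i)) → x = y) ∧
    (∀ y : {y : ∀ i, F i // ∀ (i j : ℕ) (h : j ≤ i), fT h (y i) = y j},
        (∀ i, β i (y.1 i) = 0) ↔
          ∃ x : {x : ∀ i, E i // ∀ (i j : ℕ) (h : j ≤ i), eT h (x i) = x j},
            ∀ i, α i (x.1 i) = y.1 i) ∧
    (∀ z : {z : ∀ i, G i // ∀ (i j : ℕ) (h : j ≤ i), gT h (z i) = z j},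
        ∃ y : {y : ∀ i, F i // ∀ (i j : ℕ) (h : j ≤ i), fT h (y i) = y j},
          ∀ i, β i (y.1 i) = z.1 i) := by
  have hex : ∀ i, Exact (α i) (β i) := hexact
  refine ⟨fun x y h => Subtype.ext (funext fun i => hα_inj i (h i)), fun y => ⟨fun h => ?_, ?_⟩,
    fun z => ?_⟩
  · choose x hx using fun i => (hex i (y.1 i)).mp (h i)
    refine ⟨⟨x, fun i j hji => hα_inj j ?_⟩, hx⟩
    rw [← hα_comm hji, hx, hx, y.2 i j hji]
  · rintro ⟨x, hx⟩ i
    rw [← hx i]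
    exact (hex i).apply_apply_eq_zero _
  · have hstep : ∀ n (y : F n), β n y = z.1 n →
        ∃ w, β (n + 1) w = z.1 (n + 1) ∧ fT (Nat.le_succ n) w = y := fun n y hy =>
      (hex n).exists_lift_of_surjective (hα_comm _) (hβ_comm _) (hex (n + 1)) (hβ_surj _)
        (hML _) (hy.trans (z.2 (n + 1) n _).symm)
    obtain ⟨y, hy⟩ := exists_seq_of_forall_exists_succ _ _ (hβ_surj 0 (z.1 0)) hstep
    have hcompat : ∀ (i j : ℕ) (h : j ≤ i), fT h (y i) = y j := fun i j =>
      transition_eq_of_forall_succ (fun h => fT h) hfT_id hfT_comp fun n => (hy n).2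
    exact ⟨⟨y, hcompat⟩, fun n => (hy n).1⟩

/-- A short exact sequence of inverse systems of abelian groups indexed by ℕ,
whose first system has surjective transition maps (Mittag-Leffler), induces a
short exact sequence of inverse limits. -/
theorem limit_short_exact_of_surjective_transitions
    (E F G : ℕ → Type*)
    [∀ i, AddCommGroup (E i)] [∀ i, AddCommGroup (F i)] [∀ i, AddCommGroup (G i)]
    (eT : ∀ {i j : ℕ}, j ≤ i → (E i →+ E j))
    (fT : ∀ {i j : ℕ}, j ≤ i → (F i →+ F j))
    (gT : ∀ {i j : ℕ}, j ≤ i → (G i →+ G j))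
    (heT_id : ∀ (i : ℕ) (h : i ≤ i) (x : E i), eT h x = x)
    (hfT_id : ∀ (i : ℕ) (h : i ≤ i) (x : F i), fT h x = x)
    (hgT_id : ∀ (i : ℕ) (h : i ≤ i) (x : G i), gT h x = x)
    (heT_comp : ∀ {i j k : ℕ} (h1 : k ≤ j) (h2 : j ≤ i) (x : E i),
      eT h1 (eT h2 x) = eT (h1.trans h2) x)
    (hfT_comp : ∀ {i j k : ℕ} (h1 : k ≤ j) (h2 : j ≤ i) (x : F i),
      fT h1 (fT h2 x) = fT (h1.trans h2) x)
    (hgT_comp : ∀ {i j k : ℕ} (h1 : k ≤ j) (h2 : j ≤ i) (x : G i),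
      gT h1 (gT h2 x) = gT (h1.trans h2) x)
    (α : ∀ i, E i →+ F i) (β : ∀ i, F i →+ G i)
    (hα_comm : ∀ {i j : ℕ} (h : j ≤ i) (x : E i), fT h (α i x) = α j (eT h x))
    (hβ_comm : ∀ {i j : ℕ} (h : j ≤ i) (x : F i), gT h (β i x) = β j (fT h x))
    -- levelwise short exactness
    (hα_inj : ∀ i, Function.Injective (α i))
    (hexact : ∀ (i : ℕ) (y : F i), β i y = 0 ↔ ∃ x : E i, α i x = y)
    (hβ_surj : ∀ i, Function.Surjective (β i))
    -- Mittag-Leffler: surjective transition maps in the first system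
    (hML : ∀ {i j : ℕ} (h : j ≤ i), Function.Surjective (eT h)) :
    -- exactness of 0 → lim E → lim F → lim G → 0
    (∀ x y : {x : ∀ i, E i // ∀ (i j : ℕ) (h : j ≤ i), eT h (x i) = x j},
        (∀ i, α i (x.1 i) = α i (y.1 i)) → x = y) ∧
    (∀ y : {y : ∀ i, F i // ∀ (i j : ℕ) (h : j ≤ i), fT h (y i) = y j},
        (∀ i, β i (y.1 i) = 0) ↔
          ∃ x : {x : ∀ i, E i // ∀ (i j : ℕ) (h : j ≤ i), eT h (x i) = x j},
            ∀ i, α i (x.1 i) = y.1 i) ∧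
    (∀ z : {z : ∀ i, G i // ∀ (i j : ℕ) (h : j ≤ i), gT h (z i) = z j},
        ∃ y : {y : ∀ i, F i // ∀ (i j : ℕ) (h : j ≤ i), fT h (y i) = y j},
          ∀ i, β i (y.1 i) = z.1 i) :=
  limit_short_exact_of_surjective_transitions_general E F G eT fT gT hfT_id hfT_comp α β hα_comm
    hβ_comm hα_inj hexact hβ_surj hML
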